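/- Let C ⊆ {0,1}^n be a concept class with |C| = m ≥ 2, let k ≥ 1, and let 0 ≤ ε < 1/2. Suppose there exist a unit vector ψ ∈ ℂ^{(n+1)^k} and a family of positive semidefinite matrices (M_x)_{x ∈ C} on ℂ^{(n+1)^k} with Σ_{x∈C} M_x ≤ I, such that ⟨ψ| O_x^{⊗k} M_x O_x^{⊗k} |ψ⟩ ≥ 1−ε for every x ∈ C. Then there exists a set S ⊆ [n] with |S| ≤ 4k·log₂(m) / (1 − 2√(ε(1−ε))) such that S separates C, i.e., every pair of distinct concepts in C differs on at least one index in S. -/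

import Mathlib

/-!
Write `u_x = O_x^{⊗k} ψ`. For distinct concepts `x ≠ y` the operators `M_x`, `M_y` and
`1 - M_x - M_y` are positive, so the success conditions force `u_x` and `u_y` to be nearly
orthogonal: `|⟨u_x, u_y⟩| ≤ 2√(ε(1-ε))`. On the other hand the phases of `u_x` and `u_y` differ
only on basis states that query an index where `x` and `y` differ, so
`⟨u_x, u_y⟩ ≥ 1 - 2 q(Δ(x, y))`, where `q(j)` is the expected number of queries of `ψ` to `j` and
`Δ(x, y)` is the set of indices where `x` and `y` differ. Hence every `Δ(x, y)` carries `q`-mass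
at least `γ/2`, `γ = 1 - 2√(ε(1-ε))`, while the total mass is at most `k`. Greedily picking an
index that lies in the largest number of the remaining sets `Δ(x, y)` removes a fraction `γ/(2k)`
of them each time, so after `4k log₂ m / γ` picks none of the at most `m²` sets is left.
-/

open Matrix
open scoped ComplexOrder

/-- Extend an `n`-bit string `x` to indices `0,…,n` with `x₀ := 0` (false). -/
noncomputable def extendBit {n : ℕ} (x : Fin n → Bool) : Fin (n + 1) → Bool :=
  Fin.cases false x

/-- The `k`-fold tensor power `O_x^{⊗k}` of the phase oracle of `x`:
the diagonal matrix on `ℂ^{(n+1)^k}` acting as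
`O_x^{⊗k}|i₁,…,i_k⟩ = (−1)^{x_{i₁}+⋯+x_{i_k}}|i₁,…,i_k⟩`. -/
noncomputable def oracleK (n k : ℕ) (x : Fin n → Bool) :
    Matrix (Fin k → Fin (n + 1)) (Fin k → Fin (n + 1)) ℂ :=
  Matrix.diagonal fun i => ∏ m, if extendBit x (i m) then (-1 : ℂ) else 1

theorem sqrt_mul_sqrt_add_sqrt_mul_sqrt_le {a b : ℝ} (ha₀ : 0 ≤ a) (ha₁ : a ≤ 1) (hb₀ : 0 ≤ b)
    (hb₁ : b ≤ 1) : √a * √b + √(1 - a) * √(1 - b) ≤ √(1 - (a - b) ^ 2) := by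
  have sa := Real.sq_sqrt ha₀
  have sb := Real.sq_sqrt hb₀
  have sa' := Real.sq_sqrt (sub_nonneg.2 ha₁)
  have sb' := Real.sq_sqrt (sub_nonneg.2 hb₁)
  apply Real.le_sqrt_of_sq_le
  nlinarith [sq_nonneg (√a * √(1 - a) - √b * √(1 - b))]

section PosSemidef

variable {ι : Type*} [Fintype ι]

theorem Matrix.PosSemidef.norm_dotProduct_mulVec_le {M : Matrix ι ι ℂ} (hM : M.PosSemidef)
    (u v : ι → ℂ) :
    ‖star u ⬝ᵥ (M *ᵥ v)‖ ≤ √(star u ⬝ᵥ (M *ᵥ u)).re * √(star v ⬝ᵥ (M *ᵥ v)).re := by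
  let := M.toSeminormedAddCommGroup hM
  let := M.toInnerProductSpace hM
  have hinner : ∀ x y : ι → ℂ, inner ℂ x y = star x ⬝ᵥ (M *ᵥ y) := fun x y => dotProduct_comm _ _
  have hcs := inner_mul_inner_self_le (𝕜 := ℂ) u v
  rw [norm_inner_symm v u, ← sq, hinner, hinner, hinner] at hcs
  exact (Real.le_sqrt_of_sq_le hcs).trans_eq (Real.sqrt_mul' _ (hM.re_dotProduct_nonneg v))

theorem re_dotProduct_sub_mulVec (M N : Matrix ι ι ℂ) (w : ι → ℂ) :
    (star w ⬝ᵥ ((M - N) *ᵥ w)).re = (star w ⬝ᵥ (M *ᵥ w)).re - (star w ⬝ᵥ (N *ᵥ w)).re := by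
  rw [sub_mulVec, dotProduct_sub, Complex.sub_re]

variable [DecidableEq ι]

theorem re_dotProduct_one_mulVec {w : ι → ℂ} (hw : star w ⬝ᵥ w = 1) :
    (star w ⬝ᵥ ((1 : Matrix ι ι ℂ) *ᵥ w)).re = 1 := by
  rw [one_mulVec, hw, Complex.one_re]

theorem norm_dotProduct_le_sqrt_one_sub_sq {M : Matrix ι ι ℂ} (hM : M.PosSemidef)
    (hM₁ : (1 - M).PosSemidef) {u v : ι → ℂ} (hu : star u ⬝ᵥ u = 1) (hv : star v ⬝ᵥ v = 1) :
    ‖star u ⬝ᵥ v‖ ≤ √(1 - ((star u ⬝ᵥ (M *ᵥ u)).re - (star v ⬝ᵥ (M *ᵥ v)).re) ^ 2) := by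
  have hu₁ := hM₁.re_dotProduct_nonneg u
  have hv₁ := hM₁.re_dotProduct_nonneg v
  simp only [RCLike.re_to_complex, re_dotProduct_sub_mulVec, re_dotProduct_one_mulVec hu,
    re_dotProduct_one_mulVec hv] at hu₁ hv₁
  calc ‖star u ⬝ᵥ v‖ = ‖star u ⬝ᵥ (M *ᵥ v) + star u ⬝ᵥ ((1 - M) *ᵥ v)‖ := by
        rw [← dotProduct_add, ← add_mulVec, add_sub_cancel, one_mulVec]
    _ ≤ ‖star u ⬝ᵥ (M *ᵥ v)‖ + ‖star u ⬝ᵥ ((1 - M) *ᵥ v)‖ := norm_add_le _ _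
    _ ≤ _ := add_le_add (hM.norm_dotProduct_mulVec_le u v) (hM₁.norm_dotProduct_mulVec_le u v)
    _ ≤ _ := by
        simp only [re_dotProduct_sub_mulVec, re_dotProduct_one_mulVec hu,
          re_dotProduct_one_mulVec hv]
        exact sqrt_mul_sqrt_add_sqrt_mul_sqrt_le (hM.re_dotProduct_nonneg u) (by linarith)
          (hM.re_dotProduct_nonneg v) (by linarith)

theorem norm_dotProduct_le_two_mul_sqrt {M N : Matrix ι ι ℂ} (hM : M.PosSemidef)
    (hN : N.PosSemidef) (hMN : (1 - M - N).PosSemidef) {u v : ι → ℂ} (hu : star u ⬝ᵥ u = 1)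
    (hv : star v ⬝ᵥ v = 1) {ε : ℝ} (hε : ε ≤ 1 / 2) (hMu : 1 - ε ≤ (star u ⬝ᵥ (M *ᵥ u)).re)
    (hNv : 1 - ε ≤ (star v ⬝ᵥ (N *ᵥ v)).re) :
    ‖star u ⬝ᵥ v‖ ≤ 2 * √(ε * (1 - ε)) := by
  have hMv : (star v ⬝ᵥ (M *ᵥ v)).re ≤ ε := by
    have := hMN.re_dotProduct_nonneg v
    simp only [RCLike.re_to_complex, re_dotProduct_sub_mulVec, re_dotProduct_one_mulVec hv] at this
    linarith
  calc ‖star u ⬝ᵥ v‖ ≤ _ :=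
        norm_dotProduct_le_sqrt_one_sub_sq hM (by simpa using hMN.add hN) hu hv
    _ ≤ √(2 ^ 2 * (ε * (1 - ε))) := Real.sqrt_le_sqrt (by nlinarith)
    _ = 2 * √(ε * (1 - ε)) := by rw [Real.sqrt_mul (by positivity), Real.sqrt_sq zero_le_two]

end PosSemidef

theorem posSemidef_one_sub_sub_of_mem {ι κ : Type*} [DecidableEq ι] [DecidableEq κ]
    {M : κ → Matrix ι ι ℂ}
    {C : Finset κ} (hM : ∀ x ∈ C, (M x).PosSemidef) (hMC : (1 - ∑ x ∈ C, M x).PosSemidef)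
    {x y : κ} (hx : x ∈ C) (hy : y ∈ C) (hxy : x ≠ y) : (1 - M x - M y).PosSemidef := by
  have hy' : y ∈ C.erase x := Finset.mem_erase.2 ⟨hxy.symm, hy⟩
  have hsplit : 1 - M x - M y = (1 - ∑ z ∈ C, M z) + ∑ z ∈ (C.erase x).erase y, M z := by
    rw [← Finset.add_sum_erase C M hx, ← Finset.add_sum_erase _ M hy']
    abel
  rw [hsplit]
  exact hMC.add (posSemidef_sum _ fun z hz =>
    hM z (Finset.mem_of_mem_erase (Finset.mem_of_mem_erase hz)))

section QueryMass

open Finset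

variable {α : Type*} {k : ℕ}

def signProd (b : α → Bool) (i : Fin k → α) : ℝ :=
  ∏ m, if b (i m) then -1 else 1

theorem signProd_mul_signProd [DecidableEq α] (b c : α → Bool) (i : Fin k → α) :
    signProd b i * signProd c i = (-1) ^ #{m | b (i m) ≠ c (i m)} := by
  rw [signProd, signProd, ← prod_mul_distrib]
  trans ∏ m, if b (i m) ≠ c (i m) then (-1 : ℝ) else 1
  · refine prod_congr rfl fun m _ => ?_
    cases b (i m) <;> cases c (i m) <;> norm_num
  · rw [prod_ite, prod_const, prod_const, one_pow, mul_one]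

theorem one_sub_two_mul_le_neg_one_pow (c : ℕ) : 1 - 2 * (c : ℝ) ≤ (-1) ^ c := by
  rcases c.even_or_odd with h | h
  · rw [h.neg_one_pow]; linarith [(c.cast_nonneg : (0 : ℝ) ≤ c)]
  · rw [h.neg_one_pow]; linarith [(Nat.one_le_cast.2 h.pos : (1 : ℝ) ≤ c)]

variable [Fintype α] [DecidableEq α]

/-- The expected number of the `k` queries of `ψ` that go to `a`. -/
noncomputable def queryMass (ψ : (Fin k → α) → ℂ) (a : α) : ℝ :=
  ∑ i, ‖ψ i‖ ^ 2 * #{m | i m = a}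

theorem queryMass_nonneg (ψ : (Fin k → α) → ℂ) (a : α) : 0 ≤ queryMass ψ a :=
  sum_nonneg fun _ _ => by positivity

theorem sum_queryMass (ψ : (Fin k → α) → ℂ) : ∑ a, queryMass ψ a = k * ∑ i, ‖ψ i‖ ^ 2 := by
  simp only [queryMass]
  rw [sum_comm, mul_sum]
  refine sum_congr rfl fun i _ => ?_
  rw [← mul_sum, mul_comm]
  congr 1
  exact_mod_cast (sum_card_fiberwise_eq_card_filter _ _ _).trans (by simp)

theorem sum_sub_two_mul_sum_queryMass_le (ψ : (Fin k → α) → ℂ) (b c : α → Bool) :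
    ∑ i, ‖ψ i‖ ^ 2 - 2 * ∑ a with b a ≠ c a, queryMass ψ a ≤
      ∑ i, signProd b i * signProd c i * ‖ψ i‖ ^ 2 := by
  have hcount : ∀ i : Fin k → α,
      ∑ a with b a ≠ c a, (#{m | i m = a} : ℝ) = #{m | b (i m) ≠ c (i m)} := fun i => by
    exact_mod_cast (sum_card_fiberwise_eq_card_filter _ _ _).trans (by simp)
  simp only [queryMass]
  rw [sum_comm, mul_sum, ← sum_sub_distrib]
  refine sum_le_sum fun i _ => ?_
  rw [← mul_sum, hcount, signProd_mul_signProd]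
  have := mul_le_mul_of_nonneg_right (one_sub_two_mul_le_neg_one_pow #{m | b (i m) ≠ c (i m)})
    (sq_nonneg ‖ψ i‖)
  linarith

end QueryMass

section Oracle

open Finset

variable {n k : ℕ}

theorem sum_queryMass_succ_le {ψ : (Fin k → Fin (n + 1)) → ℂ} (hψ : ∑ i, ‖ψ i‖ ^ 2 = 1) :
    ∑ j : Fin n, queryMass ψ j.succ ≤ k := by
  have := sum_queryMass ψ
  rw [hψ, mul_one, Fin.sum_univ_succ] at this
  linarith [queryMass_nonneg ψ 0]

theorem sum_filter_extendBit_ne (x y : Fin n → Bool) (f : Fin (n + 1) → ℝ) :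
    ∑ a with extendBit x a ≠ extendBit y a, f a = ∑ j with x j ≠ y j, f j.succ := by
  rw [sum_filter, sum_filter, Fin.sum_univ_succ]
  simp only [extendBit, Fin.cases_zero, Fin.cases_succ, ne_eq, not_true_eq_false, if_false,
    zero_add]
  congr!

theorem oracleK_eq_diagonal (x : Fin n → Bool) :
    oracleK n k x = diagonal fun i => (signProd (extendBit x) i : ℂ) := by
  unfold oracleK signProd
  congr 1
  ext i
  push_cast
  exact prod_congr rfl fun m _ => by split <;> simp

theorem isHermitian_oracleK (x : Fin n → Bool) : (oracleK n k x).IsHermitian := by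
  rw [oracleK_eq_diagonal]
  exact isHermitian_diagonal_of_self_adjoint _ (funext fun i => Complex.conj_ofReal _)

theorem Matrix.IsHermitian.dotProduct_mul_mul_mulVec {ι : Type*} [Fintype ι]
    {A : Matrix ι ι ℂ} (hA : A.IsHermitian) (M : Matrix ι ι ℂ) (v : ι → ℂ) :
    star v ⬝ᵥ ((A * M * A) *ᵥ v) = star (A *ᵥ v) ⬝ᵥ (M *ᵥ (A *ᵥ v)) := by
  rw [← mulVec_mulVec, ← mulVec_mulVec, dotProduct_mulVec, star_mulVec, hA.eq]

theorem star_diagonal_mulVec_dotProduct_diagonal_mulVec {ι : Type*} [Fintype ι]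
    [DecidableEq ι] (d e : ι → ℝ) (v : ι → ℂ) :
    star (diagonal (fun i => (d i : ℂ)) *ᵥ v) ⬝ᵥ (diagonal (fun i => (e i : ℂ)) *ᵥ v) =
      ((∑ i, d i * e i * ‖v i‖ ^ 2 : ℝ) : ℂ) := by
  simp only [dotProduct, mulVec_diagonal, Pi.star_apply, star_mul', Complex.star_def,
    Complex.conj_ofReal]
  push_cast
  refine sum_congr rfl fun i _ => ?_
  rw [← Complex.mul_conj']
  ring

theorem star_oracleK_mulVec_dotProduct (x y : Fin n → Bool) (ψ : (Fin k → Fin (n + 1)) → ℂ) :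
    star (oracleK n k x *ᵥ ψ) ⬝ᵥ (oracleK n k y *ᵥ ψ) =
      ((∑ i, signProd (extendBit x) i * signProd (extendBit y) i * ‖ψ i‖ ^ 2 : ℝ) : ℂ) := by
  rw [oracleK_eq_diagonal, oracleK_eq_diagonal, star_diagonal_mulVec_dotProduct_diagonal_mulVec]

theorem star_oracleK_mulVec_dotProduct_self {ψ : (Fin k → Fin (n + 1)) → ℂ}
    (hψ : ∑ i, ‖ψ i‖ ^ 2 = 1) (x : Fin n → Bool) :
    star (oracleK n k x *ᵥ ψ) ⬝ᵥ (oracleK n k x *ᵥ ψ) = 1 := by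
  simp [star_oracleK_mulVec_dotProduct, signProd_mul_signProd, hψ]

theorem one_sub_two_mul_sum_queryMass_le_re {ψ : (Fin k → Fin (n + 1)) → ℂ}
    (hψ : ∑ i, ‖ψ i‖ ^ 2 = 1) (x y : Fin n → Bool) :
    1 - 2 * ∑ j with x j ≠ y j, queryMass ψ j.succ ≤
      (star (oracleK n k x *ᵥ ψ) ⬝ᵥ (oracleK n k y *ᵥ ψ)).re := by
  rw [star_oracleK_mulVec_dotProduct, Complex.ofReal_re, ← sum_filter_extendBit_ne, ← hψ]
  exact sum_sub_two_mul_sum_queryMass_le ψ _ _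

theorem one_sub_two_mul_sqrt_le_two_mul_sum_queryMass {ψ : (Fin k → Fin (n + 1)) → ℂ}
    (hψ : ∑ i, ‖ψ i‖ ^ 2 = 1) {x y : Fin n → Bool}
    {Mx My : Matrix (Fin k → Fin (n + 1)) (Fin k → Fin (n + 1)) ℂ} (hMx : Mx.PosSemidef)
    (hMy : My.PosSemidef) (hMxy : (1 - Mx - My).PosSemidef) {ε : ℝ} (hε : ε ≤ 1 / 2)
    (hx : ((1 - ε : ℝ) : ℂ) ≤ star ψ ⬝ᵥ ((oracleK n k x * Mx * oracleK n k x) *ᵥ ψ))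
    (hy : ((1 - ε : ℝ) : ℂ) ≤ star ψ ⬝ᵥ ((oracleK n k y * My * oracleK n k y) *ᵥ ψ)) :
    1 - 2 * √(ε * (1 - ε)) ≤ 2 * ∑ j with x j ≠ y j, queryMass ψ j.succ := by
  have hsuccess : ∀ z M, ((1 - ε : ℝ) : ℂ) ≤ star ψ ⬝ᵥ ((oracleK n k z * M * oracleK n k z) *ᵥ ψ) →
      1 - ε ≤ (star (oracleK n k z *ᵥ ψ) ⬝ᵥ (M *ᵥ (oracleK n k z *ᵥ ψ))).re := fun z M h => by
    simpa [(isHermitian_oracleK z).dotProduct_mul_mul_mulVec] using (Complex.le_def.1 h).1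
  have := (one_sub_two_mul_sum_queryMass_le_re hψ x y).trans <| (Complex.re_le_norm _).trans <|
    norm_dotProduct_le_two_mul_sqrt hMx hMy hMxy (star_oracleK_mulVec_dotProduct_self hψ x)
      (star_oracleK_mulVec_dotProduct_self hψ y) hε (hsuccess x Mx hx) (hsuccess y My hy)
  linarith

end Oracle

section HittingSet

open Finset

variable {α : Type*} [Fintype α] [DecidableEq α] {q : α → ℝ} {K w : ℝ}

theorem exists_mul_card_le_mul_card_filter_mem [Nonempty α] (hq : ∀ a, 0 ≤ q a)
    (hK : ∑ a, q a ≤ K) {F : Finset (Finset α)} (hF : ∀ A ∈ F, w ≤ ∑ a ∈ A, q a) :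
    ∃ a, w * #F ≤ K * #{A ∈ F | a ∈ A} := by
  obtain ⟨a₀, -, ha₀⟩ := exists_max_image univ (fun a => (#{A ∈ F | a ∈ A} : ℝ)) univ_nonempty
  refine ⟨a₀, ?_⟩
  calc w * #F = ∑ _A ∈ F, w := by rw [sum_const, nsmul_eq_mul, mul_comm]
    _ ≤ ∑ A ∈ F, ∑ a ∈ A, q a := sum_le_sum hF
    _ = ∑ a, ∑ A ∈ F with a ∈ A, q a := sum_comm' (by simp)
    _ = ∑ a, q a * #{A ∈ F | a ∈ A} := by simp only [sum_const, nsmul_eq_mul, mul_comm]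
    _ ≤ ∑ a, q a * #{A ∈ F | a₀ ∈ A} :=
        sum_le_sum fun a _ => mul_le_mul_of_nonneg_left (ha₀ a (mem_univ a)) (hq a)
    _ ≤ K * #{A ∈ F | a₀ ∈ A} := by
        rw [← sum_mul]; exact mul_le_mul_of_nonneg_right hK (by positivity)

theorem exists_hitting_set_card_le (hq : ∀ a, 0 ≤ q a) (hw : 0 < w) (hK : ∑ a, q a ≤ K)
    (t : ℕ) (F : Finset (Finset α)) (hF : ∀ A ∈ F, w ≤ ∑ a ∈ A, q a)
    (hFt : #F * (1 - w / K) ^ t < 1) :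
    ∃ S : Finset α, #S ≤ t ∧ ∀ A ∈ F, ∃ a ∈ S, a ∈ A := by
  induction t generalizing F with
  | zero =>
    have : F = ∅ := by simpa using hFt
    exact ⟨∅, by simp, by simp [this]⟩
  | succ t ih =>
    obtain rfl | ⟨A₀, hA₀⟩ := F.eq_empty_or_nonempty
    · exact ⟨∅, by simp, by simp⟩
    have hwA₀ := hF A₀ hA₀
    obtain ⟨a₁, -, -⟩ := exists_ne_zero_of_sum_ne_zero (hw.trans_le hwA₀).ne'
    have : Nonempty α := ⟨a₁⟩
    have hwK : w ≤ K := hwA₀.trans ((sum_le_univ_sum_of_nonneg hq).trans hK)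
    have hK0 : 0 < K := hw.trans_le hwK
    obtain ⟨a, ha⟩ := exists_mul_card_le_mul_card_filter_mem hq hK hF
    set F' := {A ∈ F | a ∉ A}
    have hF' : #F' ≤ #F * (1 - w / K) := by
      have hsplit : (#{A ∈ F | a ∈ A} : ℝ) + #F' = #F := by
        exact_mod_cast card_filter_add_card_filter_not (s := F) (a ∈ ·)
      have : #F * w / K ≤ #{A ∈ F | a ∈ A} := by rw [div_le_iff₀ hK0]; linarith
      rw [mul_one_sub, mul_div_assoc']
      linarith
    have hF't : #F' * (1 - w / K) ^ t < 1 :=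
      calc (#F' : ℝ) * (1 - w / K) ^ t ≤ #F * (1 - w / K) * (1 - w / K) ^ t := by
            gcongr
            exact pow_nonneg (sub_nonneg.2 ((div_le_one hK0).2 hwK)) t
        _ < 1 := by rwa [mul_assoc, ← pow_succ']
    obtain ⟨S, hS, hSF'⟩ := ih F' (fun A hA => hF A (mem_filter.1 hA).1) hF't
    refine ⟨insert a S, (card_insert_le a S).trans (by omega), fun A hA => ?_⟩
    by_cases haA : a ∈ A
    · exact ⟨a, mem_insert_self a S, haA⟩
    · obtain ⟨b, hbS, hbA⟩ := hSF' A (mem_filter.2 ⟨hA, haA⟩)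
      exact ⟨b, mem_insert_of_mem hbS, hbA⟩

end HittingSet

theorem sq_mul_one_sub_pow_floor_lt_one {k m : ℕ} (hk : 1 ≤ k) (hm : 2 ≤ m) {γ : ℝ}
    (hγ₀ : 0 < γ) (hγ₁ : γ ≤ 1) :
    (m : ℝ) ^ 2 * (1 - γ / 2 / k) ^ ⌊4 * k * Real.logb 2 m / γ⌋₊ < 1 := by
  set B := 4 * k * Real.logb 2 m / γ
  set t := ⌊B⌋₊
  have hk' : (1 : ℝ) ≤ k := by exact_mod_cast hk
  have hm' : (2 : ℝ) ≤ m := by exact_mod_cast hm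
  have hlog2 : Real.log 2 < 0.7 := Real.log_two_lt_d9.trans (by norm_num)
  have hlogb : 1 ≤ Real.logb 2 m := by
    rwa [Real.le_logb_iff_rpow_le one_lt_two (by positivity), Real.rpow_one]
  have hB : 4 ≤ B := by rw [le_div_iff₀ hγ₀]; nlinarith
  have ht : B - 1 < t := Nat.sub_one_lt_floor B
  have hlogm : 2 * Real.log m = B * Real.log 2 * (γ / 2 / k) := by
    simp only [B, Real.logb]
    field_simp
    ring
  have hx : 0 ≤ 1 - γ / 2 / k := by
    rw [sub_nonneg, div_le_one (by positivity)]; linarith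
  -- `t > B - 1 ≥ B log 2`, as `B ≥ 4` and `log 2 < 0.7`
  have hexp : 2 * Real.log m < t * (γ / 2 / k) := by
    rw [hlogm]
    gcongr
    nlinarith
  calc (m : ℝ) ^ 2 * (1 - γ / 2 / k) ^ t
      ≤ Real.exp (2 * Real.log m) * Real.exp (-(γ / 2 / k)) ^ t := by
        rw [show (2 : ℝ) * Real.log m = Real.log ((m : ℝ) ^ 2) by rw [Real.log_pow]; norm_num,
          Real.exp_log (by positivity)]
        gcongr
        exact Real.one_sub_le_exp_neg _
    _ = Real.exp (2 * Real.log m - t * (γ / 2 / k)) := by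
        rw [← Real.exp_nat_mul, ← Real.exp_add]; ring_nf
    _ < 1 := Real.exp_lt_one_iff.2 (by linarith)

theorem nonadaptive_quantum_learning_separating_set_general
    (n k m : ℕ) (hk : 1 ≤ k)
    (C : Finset (Fin n → Bool)) (hm : C.card = m) (hm2 : 2 ≤ m)
    (ε : ℝ) (hε1 : ε < 1 / 2)
    (ψ : (Fin k → Fin (n + 1)) → ℂ) (hψ : ∑ i, ‖ψ i‖ ^ 2 = 1)
    (M : (Fin n → Bool) → Matrix (Fin k → Fin (n + 1)) (Fin k → Fin (n + 1)) ℂ)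
    (hM : ∀ x ∈ C, (M x).PosSemidef)
    (hMI : (1 - ∑ x ∈ C, M x).PosSemidef)
    (hsucc : ∀ x ∈ C,
      ((1 - ε : ℝ) : ℂ) ≤ star ψ ⬝ᵥ ((oracleK n k x * M x * oracleK n k x) *ᵥ ψ)) :
    ∃ S : Finset (Fin n),
      (S.card : ℝ) ≤ 4 * k * Real.logb 2 m / (1 - 2 * Real.sqrt (ε * (1 - ε))) ∧
      ∀ x ∈ C, ∀ y ∈ C, x ≠ y → ∃ j ∈ S, x j ≠ y j := by
  set γ := 1 - 2 * √(ε * (1 - ε))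
  have hγ₀ : 0 < γ := by
    have : √(ε * (1 - ε)) < 1 / 2 := (Real.sqrt_lt' one_half_pos).2 (by nlinarith)
    linarith
  have hγ₁ : γ ≤ 1 := by linarith [Real.sqrt_nonneg (ε * (1 - ε))]
  set F : Finset (Finset (Fin n)) :=
    C.offDiag.image fun p => Finset.univ.filter fun j => p.1 j ≠ p.2 j
  have hF : ∀ A ∈ F, γ / 2 ≤ ∑ j ∈ A, queryMass ψ j.succ := by
    simp only [F, Finset.mem_image, Finset.mem_offDiag]
    rintro _ ⟨⟨x, y⟩, ⟨hx, hy, hxy⟩, rfl⟩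
    have := one_sub_two_mul_sqrt_le_two_mul_sum_queryMass hψ (hM x hx) (hM y hy)
      (posSemidef_one_sub_sub_of_mem hM hMI hx hy hxy) hε1.le (hsucc x hx) (hsucc y hy)
    linarith
  have hFcard : (F.card : ℝ) ≤ m ^ 2 := by
    have hF : F.card ≤ C.offDiag.card := Finset.card_image_le
    rw [Finset.offDiag_card, hm, ← sq] at hF
    exact_mod_cast hF.trans (Nat.sub_le _ _)
  have hρ : 0 ≤ 1 - γ / 2 / k := by
    rw [sub_nonneg, div_le_one (by positivity)]
    linarith [(Nat.one_le_cast.2 hk : (1 : ℝ) ≤ k)]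
  have hq : ∀ j : Fin n, 0 ≤ queryMass ψ j.succ := fun j => queryMass_nonneg ψ j.succ
  obtain ⟨S, hS, hSF⟩ := exists_hitting_set_card_le hq (half_pos hγ₀) (sum_queryMass_succ_le hψ)
    _ F hF ((mul_le_mul_of_nonneg_right hFcard (pow_nonneg hρ _)).trans_lt
      (sq_mul_one_sub_pow_floor_lt_one hk hm2 hγ₀ hγ₁))
  refine ⟨S, (Nat.cast_le.2 hS).trans (Nat.floor_le ?_), fun x hx y hy hxy => ?_⟩
  · have := Real.logb_nonneg one_lt_two (by exact_mod_cast (one_le_two.trans hm2) : (1 : ℝ) ≤ m)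
    positivity
  · obtain ⟨j, hjS, hj⟩ :=
      hSF _ (Finset.mem_image_of_mem _ (Finset.mem_offDiag.2 ⟨hx, hy, hxy⟩ : (x, y) ∈ C.offDiag))
    exact ⟨j, hjS, (Finset.mem_filter.1 hj).2⟩

/-- If a nonadaptive quantum query algorithm `(ψ, (M_x)_{x∈C})` making `k`
queries learns a concept class `C` of size `m ≥ 2` with failure probability at most
`ε < 1/2`, then there is a separating set `S ⊆ [n]`, i.e. a set on which every pair of
distinct concepts differs, with `|S| ≤ 4k·log₂(m)/(1 − 2√(ε(1−ε)))`. -/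
theorem nonadaptive_quantum_learning_separating_set
    (n k m : ℕ) (hk : 1 ≤ k)
    (C : Finset (Fin n → Bool)) (hm : C.card = m) (hm2 : 2 ≤ m)
    (ε : ℝ) (hε0 : 0 ≤ ε) (hε1 : ε < 1 / 2)
    (ψ : (Fin k → Fin (n + 1)) → ℂ) (hψ : ∑ i, ‖ψ i‖ ^ 2 = 1)
    (M : (Fin n → Bool) → Matrix (Fin k → Fin (n + 1)) (Fin k → Fin (n + 1)) ℂ)
    (hM : ∀ x ∈ C, (M x).PosSemidef)
    (hMI : (1 - ∑ x ∈ C, M x).PosSemidef)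
    (hsucc : ∀ x ∈ C,
      ((1 - ε : ℝ) : ℂ) ≤ star ψ ⬝ᵥ ((oracleK n k x * M x * oracleK n k x) *ᵥ ψ)) :
    ∃ S : Finset (Fin n),
      (S.card : ℝ) ≤ 4 * k * Real.logb 2 m / (1 - 2 * Real.sqrt (ε * (1 - ε))) ∧
      ∀ x ∈ C, ∀ y ∈ C, x ≠ y → ∃ j ∈ S, x j ≠ y j :=
  nonadaptive_quantum_learning_separating_set_general n k m hk C hm hm2 ε hε1 ψ hψ M hM hMI hsucc
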